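/- arXiv:2407.15898 — 5 statements merged into one kernel-verified Lean document; each statement's English description precedes it below -/
import Mathlib

section
/- Let n ≥ 6. Then λ1(Γ_{n,0}) > n−4, and λ1(Γ_{n,0}) equals the largest real root of the equation λ³ − (n−6)λ² − 3(n−4)λ − (n−3) = 0. -/
structure SignedGraph (V : Type*) where
  G : SimpleGraph V
  sign : V → V → ℤ
  sign_symm : ∀ u v, sign u v = sign v u
  sign_mem : ∀ u v, G.Adj u v → sign u v = 1 ∨ sign u v = -1
  sign_not : ∀ u v, ¬ G.Adj u v → sign u v = 0

namespace SignedGraph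

variable {V : Type*}

/-- The adjacency matrix of a signed graph, over `ℝ`. -/
noncomputable def adjMatrix (Γ : SignedGraph V) : Matrix V V ℝ :=
  fun u v => (Γ.sign u v : ℝ)

/-- The largest eigenvalue `λ₁` of a signed graph. -/
noncomputable def lambda1 (Γ : SignedGraph V) [Fintype V] : ℝ :=
  letI := Classical.decEq V
  sSup (spectrum ℝ Γ.adjMatrix)

/-- The smallest eigenvalue `λₙ` of a signed graph. -/
noncomputable def lambdaMin (Γ : SignedGraph V) [Fintype V] : ℝ :=
  letI := Classical.decEq V
  sInf (spectrum ℝ Γ.adjMatrix)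

/-- The spectral radius `ρ = max {λ₁, -λₙ}` of a signed graph. -/
noncomputable def rho (Γ : SignedGraph V) [Fintype V] : ℝ :=
  max Γ.lambda1 (-Γ.lambdaMin)

/-- The sign (product of edge signs) of a walk. -/
def walkSign (Γ : SignedGraph V) {G' : SimpleGraph V} : ∀ {u v : V}, G'.Walk u v → ℤ
  | _, _, .nil => 1
  | _, _, .cons (u := a) (v := b) _ p => Γ.sign a b * walkSign Γ p

/-- A signed graph is balanced if every cycle is positive. -/
def Balanced (Γ : SignedGraph V) : Prop :=
  ∀ (u : V) (w : Γ.G.Walk u u), w.IsCycle → Γ.walkSign w = 1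

def Unbalanced (Γ : SignedGraph V) : Prop := ¬ Γ.Balanced

/-- `Γ` has a negative cycle of length `k`. -/
def HasNegCycleOfLength (Γ : SignedGraph V) (k : ℕ) : Prop :=
  ∃ (u : V) (w : Γ.G.Walk u u), w.IsCycle ∧ Γ.walkSign w = -1 ∧ w.length = k

/-- Switching equivalence: same underlying graph and signs related by a switching function. -/
def SwitchingEquivalent (Γ Γ' : SignedGraph V) : Prop :=
  Γ.G = Γ'.G ∧ ∃ s : V → ℤ, (∀ v, s v = 1 ∨ s v = -1) ∧
    ∀ u v, Γ'.sign u v = s u * Γ.sign u v * s v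

/-- Switching isomorphism. -/
def SwitchingIsomorphic {V' : Type*} (Γ : SignedGraph V) (Γ' : SignedGraph V') : Prop :=
  ∃ (e : V ≃ V') (s : V → ℤ), (∀ v, s v = 1 ∨ s v = -1) ∧
    (∀ u v, Γ'.G.Adj (e u) (e v) ↔ Γ.G.Adj u v) ∧
    (∀ u v, Γ'.sign (e u) (e v) = s u * Γ.sign u v * s v)

/-- Build a signed graph from a symmetric sign function with values in `{0, 1, -1}`. -/
def ofSign (s : V → V → ℤ) (hsymm : ∀ u v, s u v = s v u)
    (hloop : ∀ v, s v v = 0)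
    (hval : ∀ u v, s u v = 0 ∨ s u v = 1 ∨ s u v = -1) : SignedGraph V where
  G := { Adj := fun u v => s u v ≠ 0
         symm := ⟨fun u v h => by
           show s v u ≠ 0
           rw [hsymm v u]; exact h⟩
         loopless := ⟨fun v h => h (hloop v)⟩ }
  sign := s
  sign_symm := hsymm
  sign_mem := fun u v h => (hval u v).resolve_left h
  sign_not := fun u v h => not_not.mp h

/-- Build a signed graph on `Fin n` from a sign function on ordered pairs of naturals. -/
def ofMinMaxAux (n : ℕ) (aux : ℕ → ℕ → ℤ) (h0 : ∀ a, aux a a = 0)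
    (hval : ∀ a b, aux a b = 0 ∨ aux a b = 1 ∨ aux a b = -1) : SignedGraph (Fin n) :=
  ofSign (fun i j => aux (min i.val j.val) (max i.val j.val))
    (fun i j => by
      show aux (min i.val j.val) (max i.val j.val) = aux (min j.val i.val) (max j.val i.val)
      rw [min_comm, max_comm])
    (fun i => by
      show aux (min i.val i.val) (max i.val i.val) = 0
      rw [min_self, max_self, h0])
    (fun i j => hval _ _)

def gammaNAux : ℕ → ℕ → ℤ := fun a b =>
  if a = b then 0
  else if a = 0 ∧ b = 1 then -1
  else if a = 0 ∧ b = 2 then 1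
  else if a = 1 ∧ b = 3 then 1
  else if 2 ≤ a ∧ a < b ∧ ¬(a = 2 ∧ b = 3) then 1
  else 0

/-- The signed graph `Γₙ`: a copy of `K_{n-2}` (on `{2, …, n-1}`) with the edge `{2,3}`
removed, together with two new vertices `0, 1` and edges `{0,1}` (negative),
`{0,2}` and `{1,3}` (positive); all other edges positive. -/
def GammaN (n : ℕ) : SignedGraph (Fin n) :=
  ofMinMaxAux n gammaNAux (fun a => by simp [gammaNAux])
    (fun a b => by unfold gammaNAux; split_ifs <;> simp)

def gammaNTauAux (τ : ℕ) : ℕ → ℕ → ℤ := fun a b =>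
  if a = b then 0
  else if a = 0 ∧ b = 1 then -1
  else if a = 0 ∧ b = 3 then 1
  else if a = 0 ∧ 4 ≤ b ∧ b ≤ τ + 3 then 1
  else if a = 1 ∧ b = 2 then 1
  else if a = 2 ∧ τ + 4 ≤ b then 1
  else if a = 3 ∧ 4 ≤ b then 1
  else if 4 ≤ a ∧ a < b then 1
  else 0

/-- The signed graph `Γ_{n,τ}`: here `v₁ = 0`, `v₂ = 1`, `v₃ = 2`, `v₅ = 3`,
`X = {4, …, τ+3}`, `Y = {τ+4, …, n-1}` (with `v₄ = τ+4 ∈ Y`); the edge `{0,1}` is the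
unique negative edge. -/
def GammaNTau (n τ : ℕ) : SignedGraph (Fin n) :=
  ofMinMaxAux n (gammaNTauAux τ) (fun a => by simp [gammaNTauAux])
    (fun a b => by unfold gammaNTauAux; split_ifs <;> simp)

/-- The negation `-Γ` of a signed graph. -/
def neg (Γ : SignedGraph V) : SignedGraph V where
  G := Γ.G
  sign := fun u v => - Γ.sign u v
  sign_symm := fun u v => by
    show -Γ.sign u v = -Γ.sign v u
    rw [Γ.sign_symm]
  sign_mem := fun u v h => by
    show -Γ.sign u v = 1 ∨ -Γ.sign u v = -1
    rcases Γ.sign_mem u v h with h' | h' <;> simp [h']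
  sign_not := fun u v h => by
    show -Γ.sign u v = 0
    simp [Γ.sign_not u v h]

/-- The induced signed subgraph on a set of vertices. -/
def induce (Γ : SignedGraph V) (S : Set V) : SignedGraph S where
  G := { Adj := fun u v => Γ.G.Adj u v
         symm := ⟨fun u v h => Γ.G.adj_symm h⟩
         loopless := ⟨fun u h => Γ.G.irrefl h⟩ }
  sign := fun u v => Γ.sign u v
  sign_symm := fun u v => Γ.sign_symm u v
  sign_mem := fun u v h => Γ.sign_mem u v h
  sign_not := fun u v h => Γ.sign_not u v h

/-- `S` is a balanced clique of `Γ`: it induces a complete subgraph which is balanced. -/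
def IsBalancedClique [DecidableEq V] (Γ : SignedGraph V) (S : Finset V) : Prop :=
  (∀ u ∈ S, ∀ v ∈ S, u ≠ v → Γ.G.Adj u v) ∧ (Γ.induce (S : Set V)).Balanced

end SignedGraph


/-!
Write `a, b, c, d` for the entries of an eigenvector at `v₁, v₂, v₃, v₅` and `S` for its sum over
the clique `Y` of size `m = n - 4`. The differences `a - b`, `c - d` satisfy a `2 × 2` system with
characteristic polynomial `x² - x - 1`, each entry `y` on `Y` satisfies `(x + 1) y = c + d + S`,
and once `a = b`, `c = d` the remaining equations collapse to the cubic
`x³ - (m - 2) x² - 3 m x - (m + 1) = 0`. Hence every eigenvalue larger than `2` is a root of the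
cubic, and its largest root `γ` is an eigenvalue, with an eigenvector read off from the same
equations. The cubic is negative at `m` and positive at `m + 4`, so `γ > m`.
-/

open SignedGraph Finset Matrix

theorem Matrix.mem_spectrum_iff_exists_mulVec_eq_smul {K ι : Type*} [Field K] [Fintype ι]
    [DecidableEq ι] (A : Matrix ι ι K) (x : K) :
    x ∈ spectrum K A ↔ ∃ v ≠ 0, A *ᵥ v = x • v := by
  rw [spectrum.mem_iff, Matrix.isUnit_iff_isUnit_det, isUnit_iff_ne_zero, not_not,
    ← Matrix.exists_mulVec_eq_zero_iff]
  simp only [Matrix.sub_mulVec, sub_eq_zero, Algebra.algebraMap_eq_smul_one, Matrix.smul_mulVec,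
    Matrix.one_mulVec, eq_comm]

theorem SignedGraph.lambda1_eq_of_isGreatest {V : Type*} [Fintype V] (Γ : SignedGraph V) {γ : ℝ}
    (h : IsGreatest {x | ∃ v ≠ 0, Γ.adjMatrix *ᵥ v = x • v} γ) : Γ.lambda1 = γ := by
  classical
  rw [SignedGraph.lambda1, ← h.csSup_eq]
  congr 1
  ext x
  exact Matrix.mem_spectrum_iff_exists_mulVec_eq_smul _ x

theorem lt_of_forall_eq_zero_le {f : ℝ → ℝ} (hf : Continuous f) {a b γ : ℝ} (hab : a ≤ b)
    (ha : f a < 0) (hb : 0 ≤ f b) (hγ : ∀ x, f x = 0 → x ≤ γ) : a < γ := by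
  obtain ⟨r, ⟨har, -⟩, hr⟩ := intermediate_value_Ioc hab hf.continuousOn ⟨ha, hb⟩
  exact har.trans_le (hγ r hr)

theorem Fin.sum_univ_add_four {M : Type*} [AddCommMonoid M] {m : ℕ} (f : Fin (m + 4) → M) :
    ∑ i, f i = f 0 + f 1 + f 2 + f 3 + ∑ j : Fin m, f (j.addNat 4) := by
  simp only [Fin.sum_univ_succ, Fin.succ_zero_eq_one, Fin.succ_one_eq_two, add_assoc]
  congr

theorem Fin.forall_fin_add_four {m : ℕ} {P : Fin (m + 4) → Prop} :
    (∀ i, P i) ↔ P 0 ∧ P 1 ∧ P 2 ∧ P 3 ∧ ∀ j : Fin m, P (j.addNat 4) := by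
  simp only [Fin.forall_fin_succ, Fin.succ_zero_eq_one, Fin.succ_one_eq_two]
  rfl

namespace SignedGraph.GammaNTau

variable {m : ℕ}

theorem adjMatrix_apply (n τ : ℕ) (i j : Fin n) :
    (GammaNTau n τ).adjMatrix i j = gammaNTauAux τ (min i j) (max i j) :=
  rfl

theorem adjMatrix_zero_addNat_addNat (i j : Fin m) :
    (GammaNTau (m + 4) 0).adjMatrix (i.addNat 4) (j.addNat 4) = 1 - if i = j then 1 else 0 := by
  rw [adjMatrix_apply]
  split_ifs with h
  · simp [h, gammaNTauAux]
  · simp [gammaNTauAux, Fin.val_inj, h, Ne.symm h]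

section mulVec

variable (v : Fin (m + 4) → ℝ)

theorem mulVec_zero_apply_zero : ((GammaNTau (m + 4) 0).adjMatrix *ᵥ v) 0 = -v 1 + v 3 := by
  rw [mulVec, dotProduct, Fin.sum_univ_add_four]
  simp (disch := omega) [adjMatrix_apply, Nat.mod_eq_of_lt, gammaNTauAux]

theorem mulVec_zero_apply_one : ((GammaNTau (m + 4) 0).adjMatrix *ᵥ v) 1 = -v 0 + v 2 := by
  rw [mulVec, dotProduct, Fin.sum_univ_add_four]
  simp (disch := omega) [adjMatrix_apply, Nat.mod_eq_of_lt, gammaNTauAux]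

theorem mulVec_zero_apply_two :
    ((GammaNTau (m + 4) 0).adjMatrix *ᵥ v) 2 = v 1 + ∑ j : Fin m, v (j.addNat 4) := by
  rw [mulVec, dotProduct, Fin.sum_univ_add_four]
  simp (disch := omega) [adjMatrix_apply, Nat.mod_eq_of_lt, gammaNTauAux]

theorem mulVec_zero_apply_three :
    ((GammaNTau (m + 4) 0).adjMatrix *ᵥ v) 3 = v 0 + ∑ j : Fin m, v (j.addNat 4) := by
  rw [mulVec, dotProduct, Fin.sum_univ_add_four]
  simp (disch := omega) [adjMatrix_apply, Nat.mod_eq_of_lt, gammaNTauAux]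

theorem mulVec_zero_apply_addNat (i : Fin m) :
    ((GammaNTau (m + 4) 0).adjMatrix *ᵥ v) (i.addNat 4)
      = v 2 + v 3 + ∑ j : Fin m, v (j.addNat 4) - v (i.addNat 4) := by
  rw [mulVec, dotProduct, Fin.sum_univ_add_four]
  simp only [adjMatrix_zero_addNat_addNat, sub_mul, ite_mul, one_mul, zero_mul, sum_sub_distrib,
    sum_ite_eq, mem_univ, if_true]
  simp (disch := omega) [adjMatrix_apply, Nat.mod_eq_of_lt, gammaNTauAux, add_sub_assoc]

end mulVec

def charCubic (m : ℕ) (x : ℝ) : ℝ := x ^ 3 - ((m : ℝ) - 2) * x ^ 2 - 3 * m * x - (m + 1)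

theorem eq_zero_of_mulVec_eq_smul {v : Fin (m + 4) → ℝ} {x : ℝ}
    (hv : (GammaNTau (m + 4) 0).adjMatrix *ᵥ v = x • v) (hx : x ≠ 0) (hx1 : x + 1 ≠ 0)
    (hφ : x ^ 2 - x - 1 ≠ 0) (hP : charCubic m x ≠ 0) : v = 0 := by
  have row (i) : ((GammaNTau (m + 4) 0).adjMatrix *ᵥ v) i = x * v i := by rw [hv]; rfl
  set S := ∑ j : Fin m, v (j.addNat 4)
  have e0 : x * v 0 = v 3 - v 1 := by rw [← row, mulVec_zero_apply_zero]; ring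
  have e1 : x * v 1 = v 2 - v 0 := by rw [← row, mulVec_zero_apply_one]; ring
  have e2 : x * v 2 = v 1 + S := by rw [← row, mulVec_zero_apply_two]
  have e3 : x * v 3 = v 0 + S := by rw [← row, mulVec_zero_apply_three]
  have eY (j : Fin m) : (x + 1) * v (j.addNat 4) = v 2 + v 3 + S := by
    linarith [mulVec_zero_apply_addNat v j ▸ row (j.addNat 4)]
  have eS : (x + 1 - m) * S = m * (v 2 + v 3) := by
    have := Finset.sum_congr rfl fun j (_ : j ∈ univ) => eY j
    rw [← mul_sum, sum_const, card_univ, Fintype.card_fin, nsmul_eq_mul] at this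
    linear_combination this
  have hab : v 0 = v 1 := by
    have : (x ^ 2 - x - 1) * (v 0 - v 1) = 0 := by linear_combination x * (e0 - e1) - (e2 - e3)
    linarith [(mul_eq_zero.mp this).resolve_left hφ]
  have hcd : v 2 = v 3 := by
    have : x * (v 2 - v 3) = 0 := by linear_combination e2 - e3 - hab
    linarith [(mul_eq_zero.mp this).resolve_left hx]
  have ha : v 0 = 0 := by
    have : charCubic m x * v 0 = 0 := by
      unfold charCubic
      linear_combination ((x + 1 - m) * x - 2 * m) * (e0 + hab - hcd) + (x + 1 - m) * (e2 - hab)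
        + eS - m * hcd
    exact (mul_eq_zero.mp this).resolve_left hP
  have hc : v 2 = 0 := by rw [ha, mul_zero] at e0; linarith
  have hS0 : S = 0 := by rw [hc, mul_zero] at e2; linarith
  refine funext (Fin.forall_fin_add_four.mpr ⟨ha, hab ▸ ha, hc, hcd ▸ hc, fun j => ?_⟩)
  have := eY j
  rw [← hcd, hc, hS0] at this
  exact (mul_eq_zero.mp (by linarith)).resolve_left hx1

theorem le_of_mulVec_eq_smul {γ x : ℝ} {v : Fin (m + 4) → ℝ} (hm : 2 ≤ m) (hγ : (m : ℝ) < γ)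
    (hmax : ∀ x, charCubic m x = 0 → x ≤ γ) (hv0 : v ≠ 0)
    (hv : (GammaNTau (m + 4) 0).adjMatrix *ᵥ v = x • v) : x ≤ γ := by
  by_contra! hxγ
  have hx2 : (2 : ℝ) < x := by linarith [show (2 : ℝ) ≤ m by exact_mod_cast hm]
  refine hv0 (eq_zero_of_mulVec_eq_smul hv (by positivity) (by positivity) (by nlinarith) ?_)
  exact fun h => (hmax x h).not_gt hxγ

def eigenvector (m : ℕ) (γ : ℝ) : Fin (m + 4) → ℝ := fun i =>
  if (i : ℕ) < 2 then m else if (i : ℕ) < 4 then m * (γ + 1) else γ * (γ + 1) - 1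

section eigenvector

variable (m : ℕ) (γ : ℝ)

theorem eigenvector_apply_zero : eigenvector m γ 0 = m := by simp [eigenvector]

theorem eigenvector_apply_one : eigenvector m γ 1 = m := by simp [eigenvector]

theorem eigenvector_apply_two : eigenvector m γ 2 = m * (γ + 1) := by
  simp (disch := omega) [eigenvector, Nat.mod_eq_of_lt]

theorem eigenvector_apply_three : eigenvector m γ 3 = m * (γ + 1) := by
  simp (disch := omega) [eigenvector, Nat.mod_eq_of_lt]

theorem eigenvector_apply_addNat (j : Fin m) :
    eigenvector m γ (j.addNat 4) = γ * (γ + 1) - 1 := by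
  simp [eigenvector]

end eigenvector

theorem eigenvector_ne_zero (hm : m ≠ 0) (γ : ℝ) : eigenvector m γ ≠ 0 :=
  fun h => hm (by simpa [eigenvector_apply_zero] using congrFun h 0)

theorem mulVec_eigenvector {γ : ℝ} (hγ : charCubic m γ = 0) :
    (GammaNTau (m + 4) 0).adjMatrix *ᵥ eigenvector m γ = γ • eigenvector m γ := by
  refine funext (Fin.forall_fin_add_four.mpr ⟨?_, ?_, ?_, ?_, fun j => ?_⟩) <;>
    simp only [Pi.smul_apply, smul_eq_mul, mulVec_zero_apply_zero, mulVec_zero_apply_one,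
      mulVec_zero_apply_two, mulVec_zero_apply_three, mulVec_zero_apply_addNat, sum_const,
      card_univ, Fintype.card_fin, nsmul_eq_mul, eigenvector_apply_zero, eigenvector_apply_one,
      eigenvector_apply_two, eigenvector_apply_three, eigenvector_apply_addNat]
  · ring
  · ring
  · ring
  · ring
  · unfold charCubic at hγ
    linear_combination -hγ

theorem lt_of_forall_charCubic_eq_zero_le {γ : ℝ} (hmax : ∀ x, charCubic m x = 0 → x ≤ γ) :
    (m : ℝ) < γ := by
  refine lt_of_forall_eq_zero_le (by unfold charCubic; fun_prop) (b := m + 4) (by linarith) ?_ ?_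
    hmax
  · unfold charCubic; nlinarith
  · unfold charCubic; ring_nf; positivity

end SignedGraph.GammaNTau

open SignedGraph in
/-- For `n ≥ 6`, `λ₁(Γ_{n,0}) > n−4`, and `λ₁(Γ_{n,0})` equals the largest real
root of `λ³ − (n−6)λ² − 3(n−4)λ − (n−3) = 0`. -/
theorem lambda1_GammaNTau_zero (n : ℕ) (hn : 6 ≤ n) (γ : ℝ)
    (hroot : γ ^ 3 - ((n : ℝ) - 6) * γ ^ 2 - 3 * ((n : ℝ) - 4) * γ - ((n : ℝ) - 3) = 0)
    (hmax : ∀ x : ℝ,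
      x ^ 3 - ((n : ℝ) - 6) * x ^ 2 - 3 * ((n : ℝ) - 4) * x - ((n : ℝ) - 3) = 0 → x ≤ γ) :
    (n : ℝ) - 4 < (GammaNTau n 0).lambda1 ∧ (GammaNTau n 0).lambda1 = γ := by
  obtain ⟨m, rfl⟩ : ∃ m, n = m + 4 := ⟨n - 4, by omega⟩
  have hcubic (x : ℝ) : x ^ 3 - (((m + 4 : ℕ) : ℝ) - 6) * x ^ 2 - 3 * (((m + 4 : ℕ) : ℝ) - 4) * x
      - (((m + 4 : ℕ) : ℝ) - 3) = GammaNTau.charCubic m x := by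
    push_cast [GammaNTau.charCubic]; ring
  simp only [hcubic] at hroot hmax
  have hγ := GammaNTau.lt_of_forall_charCubic_eq_zero_le hmax
  have hlambda1 : (GammaNTau (m + 4) 0).lambda1 = γ :=
    lambda1_eq_of_isGreatest _
      ⟨⟨_, GammaNTau.eigenvector_ne_zero (by omega) γ, GammaNTau.mulVec_eigenvector hroot⟩,
        fun x ⟨_, hv0, hv⟩ => GammaNTau.le_of_mulVec_eq_smul (by omega) hγ hmax hv0 hv⟩
  refine ⟨?_, hlambda1⟩
  rw [hlambda1]
  push_cast
  linarith
end

section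
/- Let n ≥ 6. The signed graph Γ_{n,n−5} is switching isomorphic to Γ_{n,0}; in particular, Γ_{n,n−5} and Γ_{n,0} have the same adjacency spectrum. -/
/-!
In `Γ_{n,n-5}` the set `Y` is the single vertex `v₄`. Exchanging `v₁ ↔ v₃` and `v₅ ↔ v₄` carries
the underlying graph of `Γ_{n,n-5}` onto that of `Γ_{n,0}`; it moves the negative edge `v₁v₂` to
`v₃v₂` and the positive edge `v₃v₂` to `v₁v₂`, and switching at `v₂` corrects both signs. A
switching isomorphism conjugates the adjacency matrix by a signed permutation matrix, so the
characteristic polynomial is unchanged.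
-/

theorem Matrix.charpoly_mul_mul_of_mul_self_eq_one {n R : Type*} [Fintype n] [DecidableEq n]
    [CommRing R] (A D : Matrix n n R) (hD : D * D = 1) : (D * A * D).charpoly = A.charpoly := by
  rw [Matrix.mul_assoc, Matrix.charpoly_mul_comm, Matrix.mul_assoc, hD, Matrix.mul_one]

namespace SignedGraph

variable {V V' : Type*}

theorem sign_ne_zero_iff (Γ : SignedGraph V) {u v : V} : Γ.sign u v ≠ 0 ↔ Γ.G.Adj u v := by
  refine ⟨fun h => ?_, fun h => ?_⟩
  · by_contra hadj
    exact h (Γ.sign_not u v hadj)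
  · rcases Γ.sign_mem u v h with h1 | h1 <;> simp [h1]

theorem SwitchingIsomorphic.of_sign_eq {Γ : SignedGraph V} {Γ' : SignedGraph V'} (e : V ≃ V')
    (s : V → ℤ) (hs : ∀ v, s v = 1 ∨ s v = -1)
    (h : ∀ u v, Γ'.sign (e u) (e v) = s u * Γ.sign u v * s v) : Γ.SwitchingIsomorphic Γ' := by
  refine ⟨e, s, hs, fun u v => ?_, h⟩
  have hu : s u ≠ 0 := by rcases hs u with h1 | h1 <;> simp [h1]
  have hv : s v ≠ 0 := by rcases hs v with h1 | h1 <;> simp [h1]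
  rw [← sign_ne_zero_iff, ← sign_ne_zero_iff, h]
  simp [hu, hv]

theorem SwitchingIsomorphic.charpoly_adjMatrix_eq [Fintype V] [DecidableEq V] [Fintype V']
    [DecidableEq V'] {Γ : SignedGraph V} {Γ' : SignedGraph V'} (h : Γ.SwitchingIsomorphic Γ') :
    Γ.adjMatrix.charpoly = Γ'.adjMatrix.charpoly := by
  obtain ⟨e, s, hs, -, hsign⟩ := h
  set D : Matrix V V ℝ := Matrix.diagonal fun v => (s v : ℝ)
  have hD : D * D = 1 := by
    rw [Matrix.diagonal_mul_diagonal, ← Matrix.diagonal_one]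
    congr 1
    ext v
    rcases hs v with h1 | h1 <;> simp [h1]
  have hconj : Matrix.reindex e.symm e.symm Γ'.adjMatrix = D * Γ.adjMatrix * D := by
    ext u v
    simp [D, adjMatrix, hsign, Matrix.mul_diagonal, Matrix.diagonal_mul]
  rw [← Matrix.charpoly_reindex e.symm, hconj, Matrix.charpoly_mul_mul_of_mul_self_eq_one _ _ hD]

end SignedGraph

namespace SignedGraph.GammaNTau

def switchingSign (a : ℕ) : ℤ := if a = 1 then -1 else 1

theorem switchingSign_eq_one_or_neg_one (a : ℕ) : switchingSign a = 1 ∨ switchingSign a = -1 := by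
  unfold switchingSign
  split_ifs <;> simp

variable (m : ℕ)

/-- With `n = m + 6`, the vertices `0, 2, 3` are `v₁, v₃, v₅`, and `m + 5` is `v₄`, the only
vertex of `Y` in `Γ_{n,n-5}`. -/
def relabel (a : ℕ) : ℕ :=
  if a = 0 then 2 else if a = 2 then 0 else if a = 3 then m + 5 else if a = m + 5 then 3 else a

theorem gammaNTauAux_relabel_of_lt {a b : ℕ} (hab : a < b) (hb : b < m + 6) :
    gammaNTauAux 0 (min (relabel m a) (relabel m b)) (max (relabel m a) (relabel m b)) =
      switchingSign a * gammaNTauAux (m + 1) a b * switchingSign b := by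
  obtain rfl | rfl | rfl | rfl | ⟨ha4, ha⟩ :
      a = 0 ∨ a = 1 ∨ a = 2 ∨ a = 3 ∨ 4 ≤ a ∧ a < m + 5 := by omega
  all_goals
    obtain rfl | rfl | rfl | ⟨hb4, hb⟩ | rfl :
        b = 1 ∨ b = 2 ∨ b = 3 ∨ 4 ≤ b ∧ b < m + 5 ∨ b = m + 5 := by omega
  all_goals try omega
  all_goals
    simp (disch := omega) only [relabel, switchingSign, if_neg, ite_true, mul_one,
      one_mul, neg_mul, mul_neg, min_eq_left, min_eq_right, max_eq_left, max_eq_right]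
    rw [gammaNTauAux, gammaNTauAux]
    simp (disch := omega) only [if_neg, if_pos, ite_true, true_and, and_true, neg_zero, neg_neg]

theorem gammaNTauAux_relabel {a b : ℕ} (ha : a < m + 6) (hb : b < m + 6) :
    gammaNTauAux 0 (min (relabel m a) (relabel m b)) (max (relabel m a) (relabel m b)) =
      switchingSign a * gammaNTauAux (m + 1) (min a b) (max a b) * switchingSign b := by
  rcases lt_trichotomy a b with hab | rfl | hab
  · rw [min_eq_left hab.le, max_eq_right hab.le]
    exact gammaNTauAux_relabel_of_lt m hab hb
  · simp [gammaNTauAux]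
  · rw [min_eq_right hab.le, max_eq_left hab.le, min_comm, max_comm,
      gammaNTauAux_relabel_of_lt m hab ha]
    ring

def relabelPerm : Equiv.Perm (Fin (m + 6)) :=
  (Equiv.swap 0 2).trans (Equiv.swap 3 (Fin.last (m + 5)))

theorem val_relabelPerm (u : Fin (m + 6)) : (relabelPerm m u : ℕ) = relabel m u := by
  have h0 : ((0 : Fin (m + 6)) : ℕ) = 0 := rfl
  have h2 : ((2 : Fin (m + 6)) : ℕ) = 2 := rfl
  have h3 : ((3 : Fin (m + 6)) : ℕ) = 3 := rfl
  have hlast : (Fin.last (m + 5) : ℕ) = m + 5 := rfl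
  simp only [relabelPerm, Equiv.trans_apply, Equiv.swap_apply_def, relabel, Fin.ext_iff]
  split_ifs <;> simp only [h0, h2, h3, hlast] at * <;> omega

theorem sign_relabelPerm (u v : Fin (m + 6)) :
    (GammaNTau (m + 6) 0).sign (relabelPerm m u) (relabelPerm m v) =
      switchingSign u * (GammaNTau (m + 6) (m + 1)).sign u v * switchingSign v := by
  simp only [GammaNTau, ofMinMaxAux, ofSign, val_relabelPerm]
  exact gammaNTauAux_relabel m u.2 v.2

end SignedGraph.GammaNTau

open SignedGraph in
/-- For `n ≥ 6`, `Γ_{n,n−5}` is switching isomorphic to `Γ_{n,0}`; in particular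
they have the same adjacency spectrum (equal characteristic polynomials). -/
theorem GammaNTau_top_switching_isomorphic (n : ℕ) (hn : 6 ≤ n) :
    (GammaNTau n (n - 5)).SwitchingIsomorphic (GammaNTau n 0) ∧
    ((GammaNTau n (n - 5)).adjMatrix).charpoly = ((GammaNTau n 0).adjMatrix).charpoly := by
  obtain ⟨m, rfl⟩ := Nat.exists_eq_add_of_le' hn
  rw [show m + 6 - 5 = m + 1 by omega]
  have h : (GammaNTau (m + 6) (m + 1)).SwitchingIsomorphic (GammaNTau (m + 6) 0) :=
    .of_sign_eq (GammaNTau.relabelPerm m) (fun u => GammaNTau.switchingSign u)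
      (fun u => GammaNTau.switchingSign_eq_one_or_neg_one u) (GammaNTau.sign_relabelPerm m)
  exact ⟨h, h.charpoly_adjMatrix_eq⟩
end

section
/- Let Γ be a signed graph of order n containing no negative cycle of length 3. Then the smallest eigenvalue of Γ satisfies λn(Γ) ≥ −n/2; equivalently, λ1(−Γ) ≤ n/2, where −Γ is obtained from Γ by reversing the signs of all edges. -/
/-! If `x` is an eigenvector of `-A(Γ)` for `μ`, then `μ ‖x‖² = ∑ -σ(uv) x_u x_v` is at most the
sum of its positive terms. Without negative triangles the product of the entries of `-A(Γ)` around
any triangle is `≤ 0`, so the pairs giving positive terms form a triangle-free graph, and a weighted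
Mantel inequality bounds their contribution by `(∑ |x_v|)² / 2 ≤ n ‖x‖² / 2`. Finally
`λₙ(Γ) = -λ₁(-Γ)`. -/

open Finset Matrix

theorem sum_filter_mul_le_sq_sum_div_two_of_triangle_free {ι : Type*} [Fintype ι]
    (R : ι → ι → Prop) [DecidableRel R] (htri : ∀ u v w, R u v → R v w → R u w → False)
    (z : ι → ℝ) (hz : ∀ v, 0 ≤ z v) :
    ∑ u, ∑ v with R u v, z u * z v ≤ (∑ v, z v) ^ 2 / 2 := by
  classical
  set S := ∑ v, z v
  set W : ι → ℝ := fun u => ∑ v with R u v, z v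
  rcases isEmpty_or_nonempty ι with _ | _
  · simp [S]
  obtain ⟨u₀, -, hu₀⟩ := exists_max_image univ W univ_nonempty
  set I : Finset ι := {v | R u₀ v}
  set w := W u₀
  have hIc : ∑ v ∈ univ \ I, z v = S - w := by
    rw [eq_sub_iff_add_eq, sum_sdiff (subset_univ I)]
  -- a neighbour of a neighbour of `u₀` is not a neighbour of `u₀`
  have hW_I : ∀ u ∈ I, W u ≤ S - w := by
    intro u hu
    rw [← hIc]
    refine sum_le_sum_of_subset_of_nonneg (fun v hv => ?_) fun v _ _ => hz v
    simp only [I, mem_filter, mem_univ, true_and, mem_sdiff] at hu hv ⊢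
    exact fun hv' => htri u₀ u v hu hv hv'
  calc ∑ u, ∑ v with R u v, z u * z v
      = ∑ u ∈ I, z u * W u + ∑ u ∈ univ \ I, z u * W u := by
        simp only [W, mul_sum]
        rw [add_comm, sum_sdiff (subset_univ I)]
    _ ≤ ∑ u ∈ I, z u * (S - w) + ∑ u ∈ univ \ I, z u * w := by
        gcongr with u hu u
        · exact hz u
        · exact hW_I u hu
        · exact hz u
        · exact hu₀ u (mem_univ u)
    _ = 2 * w * (S - w) := by rw [← sum_mul, ← sum_mul, hIc]; ring
    _ ≤ S ^ 2 / 2 := by nlinarith [sq_nonneg (S - 2 * w)]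

namespace Matrix

variable {n : Type*} [Fintype n]

theorem dotProduct_mulVec_le_sq_sum_abs_div_two {M : Matrix n n ℝ}
    (hM_abs : ∀ u v, |M u v| ≤ 1) (hM_tri : ∀ u v w, M u v * M v w * M u w ≤ 0) (x : n → ℝ) :
    x ⬝ᵥ M *ᵥ x ≤ (∑ v, |x v|) ^ 2 / 2 := by
  classical
  let R : n → n → Prop := fun u v => 0 < x u * M u v * x v
  have htri : ∀ u v w, R u v → R v w → R u w → False := by
    intro u v w huv hvw huw
    have hprod := mul_pos (mul_pos huv hvw) huw
    have : x u * M u v * x v * (x v * M v w * x w) * (x u * M u w * x w)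
        = M u v * M v w * M u w * (x u * x v * x w) ^ 2 := by ring
    nlinarith [mul_nonpos_of_nonpos_of_nonneg (hM_tri u v w) (sq_nonneg (x u * x v * x w))]
  have hterm : ∀ u v, x u * M u v * x v ≤ if R u v then |x u| * |x v| else 0 := by
    intro u v
    split_ifs with h
    · calc x u * M u v * x v ≤ |x u * M u v * x v| := le_abs_self _
        _ = |x u| * |M u v| * |x v| := by rw [abs_mul, abs_mul]
        _ ≤ |x u| * 1 * |x v| := by gcongr; exact hM_abs u v
        _ = |x u| * |x v| := by ring
    · exact not_lt.mp h
  calc x ⬝ᵥ M *ᵥ x = ∑ u, ∑ v, x u * M u v * x v := by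
        simp only [dotProduct, mulVec, mul_sum, mul_assoc]
    _ ≤ ∑ u, ∑ v with R u v, |x u| * |x v| := by
        simp only [sum_filter]
        gcongr with u _ v _
        exact hterm u v
    _ ≤ (∑ v, |x v|) ^ 2 / 2 :=
        sum_filter_mul_le_sq_sum_div_two_of_triangle_free R htri _ fun v => abs_nonneg _

theorem le_of_mem_spectrum_of_dotProduct_mulVec_le [DecidableEq n] {M : Matrix n n ℝ} {c μ : ℝ}
    (hM : ∀ x, x ⬝ᵥ M *ᵥ x ≤ c * (x ⬝ᵥ x)) (hμ : μ ∈ spectrum ℝ M) : μ ≤ c := by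
  rw [← spectrum_toLin'] at hμ
  obtain ⟨x, hx⟩ := (Module.End.hasEigenvalue_iff_mem_spectrum.mpr hμ).exists_hasEigenvector
  have hMx : M *ᵥ x = μ • x := by simpa using hx.apply_eq_smul
  have hpos : 0 < x ⬝ᵥ x :=
    (dotProduct_self_star_nonneg x).lt_of_ne (Ne.symm (dotProduct_self_eq_zero.not.mpr hx.2))
  have hμc := hM x
  rw [hMx, dotProduct_smul, smul_eq_mul] at hμc
  exact le_of_mul_le_mul_right hμc hpos

end Matrix

namespace SignedGraph

variable {V : Type*} (Γ : SignedGraph V)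

theorem adjMatrix_neg : Γ.neg.adjMatrix = -Γ.adjMatrix := by
  ext u v
  simp [adjMatrix, neg]

theorem abs_adjMatrix_le_one (u v : V) : |Γ.adjMatrix u v| ≤ 1 := by
  by_cases h : Γ.G.Adj u v
  · rcases Γ.sign_mem u v h with hs | hs <;> simp [adjMatrix, hs]
  · simp [adjMatrix, Γ.sign_not u v h]

theorem hasNegCycleOfLength_three {u v w : V} (huv : Γ.G.Adj u v) (hvw : Γ.G.Adj v w)
    (huw : Γ.G.Adj u w) (hsign : Γ.sign u v * Γ.sign v w * Γ.sign u w = -1) :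
    Γ.HasNegCycleOfLength 3 := by
  have h₁ := huv.ne
  have h₂ := hvw.ne
  have h₃ := huw.ne
  refine ⟨u, .cons huv (.cons hvw (.cons huw.symm .nil)), ?_, ?_, rfl⟩
  · simp [SimpleGraph.Walk.isCycle_def, SimpleGraph.Walk.isTrail_def, h₁, h₂, h₃, h₁.symm, h₃.symm]
  · simp only [walkSign, mul_one, Γ.sign_symm w u, ← mul_assoc, hsign]

theorem sign_mul_sign_mul_sign_nonneg (h3 : ¬ Γ.HasNegCycleOfLength 3) (u v w : V) :
    0 ≤ Γ.sign u v * Γ.sign v w * Γ.sign u w := by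
  by_contra! hneg
  have adj_of_sign_ne_zero : ∀ a b, Γ.sign a b ≠ 0 → Γ.G.Adj a b :=
    fun a b h => not_not.mp (mt (Γ.sign_not a b) h)
  have huv := adj_of_sign_ne_zero u v (by rintro h; simp [h] at hneg)
  have hvw := adj_of_sign_ne_zero v w (by rintro h; simp [h] at hneg)
  have huw := adj_of_sign_ne_zero u w (by rintro h; simp [h] at hneg)
  refine h3 (Γ.hasNegCycleOfLength_three huv hvw huw ?_)
  rcases Γ.sign_mem u v huv with a | a <;> rcases Γ.sign_mem v w hvw with b | b <;>
    rcases Γ.sign_mem u w huw with c | c <;> simp only [a, b, c] at hneg ⊢ <;> omega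

variable [Fintype V]

theorem dotProduct_neg_adjMatrix_mulVec_le (h3 : ¬ Γ.HasNegCycleOfLength 3) (x : V → ℝ) :
    x ⬝ᵥ Γ.neg.adjMatrix *ᵥ x ≤ Fintype.card V / 2 * (x ⬝ᵥ x) := by
  have habs : ∀ u v, |Γ.neg.adjMatrix u v| ≤ 1 := by
    simpa [adjMatrix_neg] using Γ.abs_adjMatrix_le_one
  have htri : ∀ u v w, Γ.neg.adjMatrix u v * Γ.neg.adjMatrix v w * Γ.neg.adjMatrix u w ≤ 0 := by
    intro u v w
    have hsign : (0 : ℝ) ≤ Γ.sign u v * Γ.sign v w * Γ.sign u w := by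
      exact_mod_cast Γ.sign_mul_sign_mul_sign_nonneg h3 u v w
    rw [adjMatrix_neg]
    simp only [Matrix.neg_apply, adjMatrix]
    linarith
  calc x ⬝ᵥ Γ.neg.adjMatrix *ᵥ x ≤ (∑ v, |x v|) ^ 2 / 2 :=
        Matrix.dotProduct_mulVec_le_sq_sum_abs_div_two habs htri x
    _ ≤ (Fintype.card V * ∑ v, |x v| ^ 2) / 2 := by
        gcongr
        exact sq_sum_le_card_mul_sum_sq
    _ = Fintype.card V / 2 * (x ⬝ᵥ x) := by
        simp only [sq_abs, dotProduct, ← sq]; ring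

theorem lambda1_neg_le_card_div_two (h3 : ¬ Γ.HasNegCycleOfLength 3) :
    Γ.neg.lambda1 ≤ Fintype.card V / 2 := by
  classical
  exact Real.sSup_le (fun μ hμ => le_of_mem_spectrum_of_dotProduct_mulVec_le
    (Γ.dotProduct_neg_adjMatrix_mulVec_le h3) hμ) (by positivity)

theorem lambdaMin_eq_neg_lambda1_neg : Γ.lambdaMin = -Γ.neg.lambda1 := by
  simp only [lambdaMin, lambda1, adjMatrix_neg, ← spectrum.neg_eq, Real.sSup_neg, neg_neg]

end SignedGraph

open SignedGraph in
/-- If a signed graph `Γ` of order `n` has no negative 3-cycle, then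
`λₙ(Γ) ≥ −n/2`; equivalently `λ₁(−Γ) ≤ n/2`. -/
theorem lambdaMin_ge_of_no_neg_triangle {V : Type*} [Fintype V] (Γ : SignedGraph V)
    (h3 : ¬ Γ.HasNegCycleOfLength 3) :
    -((Fintype.card V : ℝ) / 2) ≤ Γ.lambdaMin ∧
    Γ.neg.lambda1 ≤ (Fintype.card V : ℝ) / 2 := by
  have hneg := Γ.lambda1_neg_le_card_div_two h3
  exact ⟨by rw [lambdaMin_eq_neg_lambda1_neg]; linarith, hneg⟩
end

section
/- Let Γ be a signed graph of order n with balanced clique number ω_b(Γ) ≥ 1. Then λ1(Γ) ≤ n(1 − 1/ω_b(Γ)). -/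
/-!
Switch `Γ` by the signs `s` of a test vector `x`: each term `x p * A p q * x q` becomes
`|x p| * |x q|` times the switched sign of `pq`, so `xᵀ A x ≤ |x|ᵀ B |x|`, where `B` is the
adjacency matrix of the graph `H` of positive edges of the switched graph. On a clique of `H`
the signs of `Γ` are `s p * s q`, so every cycle in it is positive: cliques of `H` are balanced
cliques of `Γ` and `H` has clique number at most `ω`. The Motzkin–Straus inequality and
Cauchy–Schwarz then give `|x|ᵀ B |x| ≤ (1 - 1/ω) (∑ |x v|)² ≤ n (1 - 1/ω) ‖x‖²`, and testing
with an eigenvector bounds every eigenvalue.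
-/

open Finset Matrix

lemma sq_sum_le_card_support_mul_sum_sq {V : Type*} [Fintype V] (y : V → ℝ) :
    (∑ v, y v) ^ 2 ≤ #{v | y v ≠ 0} * ∑ v, y v ^ 2 := by
  have hsq : ∑ v, y v ^ 2 = ∑ v ∈ {v | y v ≠ 0}, y v ^ 2 :=
    (sum_filter_of_ne fun v _ h => by simpa using h).symm
  rw [← sum_filter_ne_zero, hsq]
  exact sq_sum_le_card_mul_sum_sq

lemma exists_intCast_mul_eq_abs {V : Type*} (x : V → ℝ) :
    ∃ s : V → ℤ, (∀ v, s v * s v = 1) ∧ ∀ v, s v * x v = |x v| := by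
  refine ⟨fun v => if x v < 0 then -1 else 1, fun v => ?_, fun v => ?_⟩ <;> by_cases h : x v < 0
  · simp [h]
  · simp [h]
  · simp [h, abs_of_neg h]
  · simp [h, abs_of_nonneg (not_lt.mp h)]

lemma Matrix.sSup_spectrum_le_of_dotProduct_mulVec_le {n : Type*} [Fintype n] [DecidableEq n]
    (A : Matrix n n ℝ) {c : ℝ} (hc : 0 ≤ c) (h : ∀ x, x ⬝ᵥ A *ᵥ x ≤ c * (x ⬝ᵥ x)) :
    sSup (spectrum ℝ A) ≤ c := by
  refine Real.sSup_le (fun μ hμ => ?_) hc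
  rw [← Matrix.spectrum_toLin', ← Module.End.hasEigenvalue_iff_mem_spectrum] at hμ
  obtain ⟨x, hx⟩ := hμ.exists_hasEigenvector
  have hAx : A *ᵥ x = μ • x := by simpa using hx.apply_eq_smul
  have hpos : 0 < x ⬝ᵥ x := by simpa using dotProduct_self_star_pos_iff.mpr hx.2
  have := h x
  rw [hAx, dotProduct_smul, smul_eq_mul] at this
  exact le_of_mul_le_mul_right this hpos

namespace SimpleGraph

variable {V : Type*} [Fintype V] (G : SimpleGraph V) [DecidableRel G.Adj]

lemma dotProduct_adjMatrix_mulVec_le {y : V → ℝ} (hy : 0 ≤ y) :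
    y ⬝ᵥ G.adjMatrix ℝ *ᵥ y ≤ (∑ v, y v) ^ 2 - ∑ v, y v ^ 2 := by
  classical
  have hrhs : (∑ v, y v) ^ 2 - ∑ v, y v ^ 2
      = ∑ p, ∑ q, (y p * y q - if p = q then y p * y q else 0) := by
    simp only [sum_sub_distrib, sum_ite_eq, mem_univ, if_true, sq, sum_mul_sum]
  rw [dotProduct_mulVec_adjMatrix, hrhs]
  gcongr with p _ q _
  by_cases hpq : p = q
  · simp [hpq]
  · have := mul_nonneg (hy p) (hy q)
    split_ifs <;> simp_all

lemma dotProduct_adjMatrix_mulVec_shift_ge [DecidableEq V] {y : V → ℝ} {u v : V}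
    (huv : ¬ G.Adj u v) (hle : (G.adjMatrix ℝ *ᵥ y) v ≤ (G.adjMatrix ℝ *ᵥ y) u) {c : ℝ} (hc : 0 ≤ c) :
    y ⬝ᵥ G.adjMatrix ℝ *ᵥ y ≤
      (y + Pi.single u c - Pi.single v c) ⬝ᵥ
        G.adjMatrix ℝ *ᵥ (y + Pi.single u c - Pi.single v c) := by
  set A := G.adjMatrix ℝ
  set d : V → ℝ := Pi.single u c - Pi.single v c
  have hd : y + Pi.single u c - Pi.single v c = y + d := by simp only [d]; abel
  have hvu : ¬ G.Adj v u := fun h => huv h.symm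
  -- the shift only moves weight between the non-adjacent `u` and `v`
  have hdd : d ⬝ᵥ A *ᵥ d = 0 := by
    simp [d, A, mulVec_sub, mulVec_single, sub_dotProduct, dotProduct_sub, single_dotProduct,
      adjMatrix_apply, huv, hvu]
  have hdy : d ⬝ᵥ A *ᵥ y = c * ((A *ᵥ y) u - (A *ᵥ y) v) := by
    simp [d, sub_dotProduct, single_dotProduct, mul_sub]
  have hyd : y ⬝ᵥ A *ᵥ d = d ⬝ᵥ A *ᵥ y := by
    rw [dotProduct_mulVec, ← mulVec_transpose, transpose_adjMatrix, dotProduct_comm]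
  rw [hd, mulVec_add, dotProduct_add, add_dotProduct, add_dotProduct, hdd, hyd, hdy]
  nlinarith [mul_nonneg hc (sub_nonneg.mpr hle)]

lemma exists_support_card_lt_of_not_isClique [DecidableEq V] {y : V → ℝ} (hy : 0 ≤ y)
    (hT : ¬ G.IsClique (({v | y v ≠ 0} : Finset V) : Set V)) :
    ∃ y' : V → ℝ, 0 ≤ y' ∧ ∑ v, y' v = ∑ v, y v ∧ #{v | y' v ≠ 0} < #{v | y v ≠ 0} ∧
      y ⬝ᵥ G.adjMatrix ℝ *ᵥ y ≤ y' ⬝ᵥ G.adjMatrix ℝ *ᵥ y' := by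
  simp only [isClique_iff, Set.Pairwise, coe_filter, mem_univ, true_and, Set.mem_ofPred_eq,
    not_forall] at hT
  obtain ⟨u, hu, v, hv, hne, huv⟩ := hT
  wlog hle : (G.adjMatrix ℝ *ᵥ y) v ≤ (G.adjMatrix ℝ *ᵥ y) u generalizing u v
  · exact this v hv u hu hne.symm (fun h => huv h.symm) (le_of_not_ge hle)
  refine ⟨y + Pi.single u (y v) - Pi.single v (y v), fun w => ?_, ?_, ?_,
    G.dotProduct_adjMatrix_mulVec_shift_ge huv hle (hy v)⟩
  · have hy' : ∀ w, 0 ≤ y w := hy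
    by_cases hwv : w = v
    · simp [hwv, hne.symm]
    · simp only [Pi.zero_apply, Pi.add_apply, Pi.sub_apply, Pi.single_apply, hwv, if_false,
        sub_zero]
      split_ifs <;> linarith [hy' v, hy' w]
  · simp [sum_add_distrib, sum_sub_distrib]
  · refine card_lt_card ⟨fun w hw => ?_, fun hsub => ?_⟩
    · simp only [mem_filter, mem_univ, true_and] at hw ⊢
      by_cases hwu : w = u
      · exact hwu ▸ hu
      · by_cases hwv : w = v <;> simp_all
    · have := hsub (by simpa using hv : v ∈ ({w | y w ≠ 0} : Finset V))
      simp [hne.symm] at this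

-- The Motzkin–Straus inequality.
theorem mul_dotProduct_adjMatrix_mulVec_le_of_cliqueNum_le {ω : ℕ} (hω : G.cliqueNum ≤ ω)
    {y : V → ℝ} (hy : 0 ≤ y) :
    ω * (y ⬝ᵥ G.adjMatrix ℝ *ᵥ y) ≤ (ω - 1) * (∑ v, y v) ^ 2 := by
  classical
  induction hn : #{v | y v ≠ 0} using Nat.strong_induction_on generalizing y with
  | _ n ih =>
  by_cases hT : G.IsClique (({v | y v ≠ 0} : Finset V) : Set V)
  · have hcard : (#{v | y v ≠ 0} : ℝ) ≤ ω := by exact_mod_cast hT.card_le_cliqueNum.trans hω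
    have := G.dotProduct_adjMatrix_mulVec_le hy
    have := sq_sum_le_card_support_mul_sum_sq y
    have : 0 ≤ ∑ v, y v ^ 2 := sum_nonneg fun v _ => sq_nonneg _
    nlinarith
  · obtain ⟨y', hy', hsum, hlt, hle⟩ := G.exists_support_card_lt_of_not_isClique hy hT
    calc (ω : ℝ) * (y ⬝ᵥ G.adjMatrix ℝ *ᵥ y) ≤ ω * (y' ⬝ᵥ G.adjMatrix ℝ *ᵥ y') := by gcongr
      _ ≤ (ω - 1) * (∑ v, y' v) ^ 2 := ih _ (hn ▸ hlt) hy' rfl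
      _ = (ω - 1) * (∑ v, y v) ^ 2 := by rw [hsum]

end SimpleGraph

namespace SignedGraph

variable {V : Type*} (Γ : SignedGraph V)

lemma sign_self (v : V) : Γ.sign v v = 0 :=
  Γ.sign_not v v (Γ.G.loopless.irrefl v)

lemma lambda1_eq_sSup_spectrum [Fintype V] [DecidableEq V] :
    Γ.lambda1 = sSup (spectrum ℝ Γ.adjMatrix) := by
  rw [lambda1, Subsingleton.elim (Classical.decEq V) ‹_›]

lemma abs_sign_le_one (u v : V) : |Γ.sign u v| ≤ 1 := by
  by_cases h : Γ.G.Adj u v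
  · rcases Γ.sign_mem u v h with h | h <;> simp [h]
  · simp [Γ.sign_not u v h]

def switchedPositiveGraph (s : V → ℤ) : SimpleGraph V where
  Adj p q := s p * Γ.sign p q * s q = 1
  symm := ⟨fun p q h => by rw [← h, Γ.sign_symm]; ring⟩
  loopless := ⟨fun p h => by simp [Γ.sign_self] at h⟩

lemma walkSign_eq_mul_of_sign_eq_mul {G' : SimpleGraph V} {t : V → ℤ}
    (ht : ∀ v, t v * t v = 1) (h : ∀ a b, G'.Adj a b → Γ.sign a b = t a * t b) :
    ∀ {u v : V} (w : G'.Walk u v), Γ.walkSign w = t u * t v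
  | _, _, .nil => (ht _).symm
  | _, c, .cons (u := a) (v := b) hab p => by
    rw [walkSign, h a b hab, walkSign_eq_mul_of_sign_eq_mul ht h p]
    linear_combination t a * t c * ht b

lemma isBalancedClique_of_sign_eq_mul [DecidableEq V] {S : Finset V} {t : V → ℤ}
    (ht : ∀ v, t v * t v = 1) (h : ∀ p ∈ S, ∀ q ∈ S, p ≠ q → Γ.sign p q = t p * t q) :
    Γ.IsBalancedClique S := by
  refine ⟨fun p hp q hq hpq => ?_, fun u w _ => ?_⟩
  · by_contra hadj
    have := h p hp q hq hpq
    rw [Γ.sign_not p q hadj] at this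
    have := ht p
    have := ht q
    nlinarith
  · rw [(Γ.induce S).walkSign_eq_mul_of_sign_eq_mul (t := fun a => t a) (fun a => ht a)
      (fun a b hab => h a a.2 b b.2 (Subtype.coe_ne_coe.mpr hab.ne)) w]
    exact ht u

lemma isBalancedClique_of_isClique_switchedPositiveGraph [DecidableEq V] {s : V → ℤ}
    (hs : ∀ v, s v * s v = 1) {S : Finset V}
    (hS : (Γ.switchedPositiveGraph s).IsClique (S : Set V)) : Γ.IsBalancedClique S :=
  Γ.isBalancedClique_of_sign_eq_mul hs fun p hp q hq hpq => by
    have h : s p * Γ.sign p q * s q = 1 := hS hp hq hpq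
    linear_combination s p * s q * h - Γ.sign p q * hs p - s p * s p * Γ.sign p q * hs q

lemma dotProduct_adjMatrix_mulVec_le_switchedPositiveGraph [Fintype V] {x : V → ℝ} {s : V → ℤ}
    (hs : ∀ v, s v * s v = 1) (hsx : ∀ v, s v * x v = |x v|)
    [DecidableRel (Γ.switchedPositiveGraph s).Adj] :
    x ⬝ᵥ Γ.adjMatrix *ᵥ x ≤ |x| ⬝ᵥ (Γ.switchedPositiveGraph s).adjMatrix ℝ *ᵥ |x| := by
  rw [SimpleGraph.dotProduct_mulVec_adjMatrix]
  simp only [dotProduct, mulVec, mul_sum]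
  gcongr with p _ q _
  have hx : ∀ v, x v = s v * |x v| := fun v => by
    rw [← hsx, ← mul_assoc, ← Int.cast_mul, hs, Int.cast_one, one_mul]
  have hk : s p * Γ.sign p q * s q ≤ 1 := by
    have := abs_le.mp (Γ.abs_sign_le_one p q)
    rcases Int.eq_one_or_neg_one_of_mul_eq_one (hs p) with h | h <;>
      rcases Int.eq_one_or_neg_one_of_mul_eq_one (hs q) with h' | h' <;>
      simp only [h, h'] <;> linarith
  have hterm : x p * (Γ.adjMatrix p q * x q)
      = |x p| * |x q| * ((s p * Γ.sign p q * s q : ℤ) : ℝ) := by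
    conv_lhs => rw [adjMatrix, hx p, hx q]
    push_cast
    ring
  have hxx : 0 ≤ |x p| * |x q| := by positivity
  rw [hterm, Pi.abs_apply, Pi.abs_apply]
  split_ifs with hadj
  · rw [show s p * Γ.sign p q * s q = 1 from hadj, Int.cast_one, mul_one]
  · have : s p * Γ.sign p q * s q ≤ 0 := by
      have : s p * Γ.sign p q * s q ≠ 1 := hadj
      omega
    exact mul_nonpos_of_nonneg_of_nonpos hxx (by exact_mod_cast this)

theorem mul_dotProduct_adjMatrix_mulVec_le [Fintype V] [DecidableEq V] {ω : ℕ} (hω : 1 ≤ ω)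
    (hmaxcl : ∀ S : Finset V, Γ.IsBalancedClique S → #S ≤ ω) (x : V → ℝ) :
    ω * (x ⬝ᵥ Γ.adjMatrix *ᵥ x) ≤ (ω - 1) * (Fintype.card V * (x ⬝ᵥ x)) := by
  classical
  obtain ⟨s, hs, hsx⟩ := exists_intCast_mul_eq_abs x
  have hclique : (Γ.switchedPositiveGraph s).cliqueNum ≤ ω := by
    obtain ⟨S, hS⟩ := (Γ.switchedPositiveGraph s).exists_isNClique_cliqueNum
    exact hS.card_eq ▸ hmaxcl S (Γ.isBalancedClique_of_isClique_switchedPositiveGraph hs hS.1)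
  have hCS : (∑ v, |x| v) ^ 2 ≤ Fintype.card V * ∑ v, |x| v ^ 2 := by
    simpa using sq_sum_le_card_mul_sum_sq (s := univ) (f := |x|)
  have hnorm : ∑ v, |x| v ^ 2 = x ⬝ᵥ x := by simp [dotProduct, sq]
  calc ω * (x ⬝ᵥ Γ.adjMatrix *ᵥ x)
      ≤ ω * (|x| ⬝ᵥ (Γ.switchedPositiveGraph s).adjMatrix ℝ *ᵥ |x|) := by
        gcongr
        exact Γ.dotProduct_adjMatrix_mulVec_le_switchedPositiveGraph hs hsx
    _ ≤ (ω - 1) * (∑ v, |x| v) ^ 2 :=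
        (Γ.switchedPositiveGraph s).mul_dotProduct_adjMatrix_mulVec_le_of_cliqueNum_le hclique
          (abs_nonneg x)
    _ ≤ (ω - 1) * (Fintype.card V * (x ⬝ᵥ x)) := by
        rw [← hnorm]
        gcongr
        exact sub_nonneg.mpr (by exact_mod_cast hω)

end SignedGraph

open SignedGraph in
theorem lambda1_le_balanced_clique_bound_general {V : Type*} [Fintype V] [DecidableEq V]
    (Γ : SignedGraph V) (ω : ℕ) (hω : 1 ≤ ω)
    (hmaxcl : ∀ S : Finset V, Γ.IsBalancedClique S → S.card ≤ ω) :
    Γ.lambda1 ≤ (Fintype.card V : ℝ) * (1 - 1 / (ω : ℝ)) := by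
  have hω' : (1 : ℝ) ≤ ω := by exact_mod_cast hω
  rw [Γ.lambda1_eq_sSup_spectrum]
  refine Matrix.sSup_spectrum_le_of_dotProduct_mulVec_le _ ?_ fun x => ?_
  · exact mul_nonneg (Nat.cast_nonneg _) (sub_nonneg.mpr ((div_le_one (by positivity)).mpr hω'))
  · refine le_of_mul_le_mul_left ?_ (by positivity : (0 : ℝ) < ω)
    calc ω * (x ⬝ᵥ Γ.adjMatrix *ᵥ x) ≤ (ω - 1) * (Fintype.card V * (x ⬝ᵥ x)) :=
          Γ.mul_dotProduct_adjMatrix_mulVec_le hω hmaxcl x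
      _ = ω * (Fintype.card V * (1 - 1 / ω) * (x ⬝ᵥ x)) := by field_simp

open SignedGraph in
/-- If `Γ` is a signed graph of order `n` with balanced clique number
`ω_b(Γ) = ω ≥ 1`, then `λ₁(Γ) ≤ n (1 − 1/ω)`. -/
theorem lambda1_le_balanced_clique_bound {V : Type*} [Fintype V] [DecidableEq V]
    (Γ : SignedGraph V) (ω : ℕ) (hω : 1 ≤ ω)
    (hex : ∃ S : Finset V, S.card = ω ∧ Γ.IsBalancedClique S)
    (hmaxcl : ∀ S : Finset V, Γ.IsBalancedClique S → S.card ≤ ω) :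
    Γ.lambda1 ≤ (Fintype.card V : ℝ) * (1 - 1 / (ω : ℝ)) :=
  lambda1_le_balanced_clique_bound_general Γ ω hω hmaxcl
end

section
/- Let Γ be a signed graph of order n, let x = (x1,…,xn)ᵀ be an eigenvector of A(Γ) associated with the largest eigenvalue λ1(Γ), and let v_r, v_s be two non-adjacent vertices of Γ with x_r x_s ≥ 0 and with x_r and x_s not both zero. If Γ' is the signed graph obtained from Γ by adding a positive edge v_r v_s, then λ1(Γ') > λ1(Γ). -/
/-! If `λ₁(Γ') ≤ λ₁(Γ) =: λ`, then `λ I - A(Γ')` is positive semidefinite. Since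
`A(Γ') x = λ x + x_s e_r + x_r e_s`, its quadratic form at `x` is `-2 x_r x_s ≤ 0`, so it vanishes
and `x` lies in the kernel of `λ I - A(Γ')`. But `(λ I - A(Γ')) x = -(x_s e_r + x_r e_s)`, which
forces `x_r = x_s = 0`. -/

open Matrix MatrixOrder

namespace SignedGraph

variable {V : Type*}

theorem isHermitian_adjMatrix (Γ : SignedGraph V) : Γ.adjMatrix.IsHermitian := by
  ext u v
  simp [adjMatrix, Γ.sign_symm u v]

theorem le_lambda1 [Fintype V] [DecidableEq V] (Γ : SignedGraph V) {μ : ℝ}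
    (hμ : μ ∈ spectrum ℝ Γ.adjMatrix) : μ ≤ Γ.lambda1 := by
  obtain rfl : ‹DecidableEq V› = Classical.decEq V := Subsingleton.elim _ _
  classical
  exact le_csSup finite_real_spectrum.bddAbove hμ

theorem posSemidef_algebraMap_sub_adjMatrix [Fintype V] [DecidableEq V] (Γ : SignedGraph V)
    {c : ℝ} (hc : Γ.lambda1 ≤ c) : (algebraMap ℝ (Matrix V V ℝ) c - Γ.adjMatrix).PosSemidef :=
  Matrix.le_iff.mp <| le_algebraMap_of_spectrum_le (fun _ hμ => (Γ.le_lambda1 hμ).trans hc)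
    Γ.isHermitian_adjMatrix.isSelfAdjoint

theorem adjMatrix_eq_add_single {Γ Γ' : SignedGraph V} [DecidableEq V] {r s : V} (hrs : r ≠ s)
    (hnadj : ¬ Γ.G.Adj r s) (hpos : Γ'.sign r s = 1)
    (hrest : ∀ u v : V, ¬ ((u = r ∧ v = s) ∨ (u = s ∧ v = r)) → Γ'.sign u v = Γ.sign u v) :
    Γ'.adjMatrix = Γ.adjMatrix + single r s 1 + single s r 1 := by
  ext u v
  by_cases huv : (u = r ∧ v = s) ∨ (u = s ∧ v = r)
  · rcases huv with ⟨rfl, rfl⟩ | ⟨rfl, rfl⟩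
    · simp [adjMatrix, hpos, Γ.sign_not _ _ hnadj, hrs]
    · simp [adjMatrix, Γ'.sign_symm u v, hpos, Γ.sign_not _ _ (hnadj ·.symm), hrs]
  · simp only [adjMatrix, hrest u v huv, Matrix.add_apply, single_apply]
    simp only [not_or, not_and] at huv
    grind

theorem adjMatrix_mulVec_of_add_edge {Γ Γ' : SignedGraph V} [Fintype V] [DecidableEq V]
    {r s : V} (hrs : r ≠ s) (hnadj : ¬ Γ.G.Adj r s) (hpos : Γ'.sign r s = 1)
    (hrest : ∀ u v : V, ¬ ((u = r ∧ v = s) ∨ (u = s ∧ v = r)) → Γ'.sign u v = Γ.sign u v)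
    (x : V → ℝ) :
    Γ'.adjMatrix *ᵥ x = Γ.adjMatrix *ᵥ x + Pi.single r (x s) + Pi.single s (x r) := by
  rw [adjMatrix_eq_add_single hrs hnadj hpos hrest, add_mulVec, add_mulVec]
  ext u
  simp [single_mulVec, Function.update_apply, Pi.single_apply]

end SignedGraph

open SignedGraph in
theorem lambda1_lt_of_add_positive_edge_general {V : Type*} [Fintype V]
    (Γ Γ' : SignedGraph V) (r s : V) (hrs : r ≠ s) (hnadj : ¬ Γ.G.Adj r s)
    (x : V → ℝ) (heig : Γ.adjMatrix.mulVec x = Γ.lambda1 • x)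
    (hprod : 0 ≤ x r * x s) (hnz : x r ≠ 0 ∨ x s ≠ 0)
    (hpos : Γ'.sign r s = 1)
    (hrest : ∀ u v : V, ¬ ((u = r ∧ v = s) ∨ (u = s ∧ v = r)) → Γ'.sign u v = Γ.sign u v) :
    Γ.lambda1 < Γ'.lambda1 := by
  classical
  by_contra! hle
  set B := algebraMap ℝ (Matrix V V ℝ) Γ.lambda1 - Γ'.adjMatrix
  have hB : B.PosSemidef := Γ'.posSemidef_algebraMap_sub_adjMatrix hle
  have hBx : B *ᵥ x = -(Pi.single r (x s) + Pi.single s (x r)) := by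
    rw [sub_mulVec, adjMatrix_mulVec_of_add_edge hrs hnadj hpos hrest, heig,
      Algebra.algebraMap_eq_smul_one, smul_mulVec, one_mulVec]
    abel
  have hquad : x ⬝ᵥ B *ᵥ x = -(2 * (x r * x s)) := by
    simp only [hBx, dotProduct_neg, dotProduct_add, dotProduct_single]
    ring
  have hBx0 : B *ᵥ x = 0 := by
    refine (hB.dotProduct_mulVec_zero_iff x).mp (le_antisymm ?_ (hB.dotProduct_mulVec_nonneg x))
    rw [star_trivial, hquad]
    linarith
  have hs0 : x s = 0 := by simpa [hBx, hrs] using congrFun hBx0 r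
  have hr0 : x r = 0 := by simpa [hBx, hrs.symm] using congrFun hBx0 s
  exact hnz.elim (· hr0) (· hs0)

open SignedGraph in
/-- Adding a positive edge between two non-adjacent vertices `r, s` with
`x_r x_s ≥ 0` and `x_r, x_s` not both zero (where `x` is an eigenvector for `λ₁`) strictly
increases the largest eigenvalue. -/
theorem lambda1_lt_of_add_positive_edge {V : Type*} [Fintype V]
    (Γ Γ' : SignedGraph V) (r s : V) (hrs : r ≠ s) (hnadj : ¬ Γ.G.Adj r s)
    (x : V → ℝ) (hx0 : x ≠ 0) (heig : Γ.adjMatrix.mulVec x = Γ.lambda1 • x)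
    (hprod : 0 ≤ x r * x s) (hnz : x r ≠ 0 ∨ x s ≠ 0)
    (hpos : Γ'.sign r s = 1)
    (hrest : ∀ u v : V, ¬ ((u = r ∧ v = s) ∨ (u = s ∧ v = r)) → Γ'.sign u v = Γ.sign u v) :
    Γ.lambda1 < Γ'.lambda1 :=
  lambda1_lt_of_add_positive_edge_general Γ Γ' r s hrs hnadj x heig hprod hnz hpos hrest
end
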